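/- If discrete random variables A, B, C on finite spaces form a Markov chain A → B → C, then J(A; (B,C)) = J(A; B). -/
import Mathlib


open scoped Classical BigOperators

/-- `μ` is a probability mass function on a finite type. -/
def IsPMF {Ω : Type*} [Fintype Ω] (μ : Ω → ℝ) : Prop :=
  (∀ ω, 0 ≤ μ ω) ∧ ∑ ω, μ ω = 1

/-- Probability that the random variable `X` takes the value `a` under `μ`. -/
noncomputable def pr {Ω α : Type*} [Fintype Ω] (μ : Ω → ℝ) (X : Ω → α) (a : α) : ℝ :=
  ∑ ω, if X ω = a then μ ω else 0

/-- Variational information `J(X;Y)`: total variation distance between the joint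
law of `(X,Y)` and the product of the marginal laws. -/
noncomputable def vinfo {Ω α β : Type*} [Fintype Ω] [Fintype α] [Fintype β]
    (μ : Ω → ℝ) (X : Ω → α) (Y : Ω → β) : ℝ :=
  (1/2) * ∑ a, ∑ b, |pr μ (fun ω => (X ω, Y ω)) (a, b) - pr μ X a * pr μ Y b|

/-- Conditional variational information `J(X;Y|W)`:
`E_W[d_TV(P(X,Y|W), P(X|W)⊗P(Y|W))]`. -/
noncomputable def condVinfo {Ω α β γ : Type*} [Fintype Ω] [Fintype α] [Fintype β] [Fintype γ]
    (μ : Ω → ℝ) (X : Ω → α) (Y : Ω → β) (W : Ω → γ) : ℝ :=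
  (1/2) * ∑ c, ∑ a, ∑ b,
    |pr μ (fun ω => (X ω, Y ω, W ω)) (a, b, c) -
      pr μ (fun ω => (X ω, W ω)) (a, c) * pr μ (fun ω => (Y ω, W ω)) (b, c) / pr μ W c|

section Aux

variable {Ω α β : Type*} [Fintype Ω]

lemma pr_nonneg (μ : Ω → ℝ) (h : ∀ ω, 0 ≤ μ ω) (X : Ω → α) (a : α) : 0 ≤ pr μ X a :=
  Finset.sum_nonneg fun ω _ => by by_cases hx : X ω = a <;> simp [hx, h ω]

lemma pr_mono (μ : Ω → ℝ) (h : ∀ ω, 0 ≤ μ ω) (X : Ω → α) (Y : Ω → β) (a : α) (b : β)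
    (himp : ∀ ω, X ω = a → Y ω = b) : pr μ X a ≤ pr μ Y b := by
  apply Finset.sum_le_sum
  intro ω _
  by_cases hx : X ω = a
  · simp [hx, himp ω hx]
  · simp only [hx, if_false]
    split <;> simp [h ω]

lemma pr_eq_zero (μ : Ω → ℝ) (h : ∀ ω, 0 ≤ μ ω) (X : Ω → α) (Y : Ω → β) (a : α) (b : β)
    (himp : ∀ ω, X ω = a → Y ω = b) (hY : pr μ Y b = 0) : pr μ X a = 0 :=
  le_antisymm (hY ▸ pr_mono μ h X Y a b himp) (pr_nonneg μ h X a)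

lemma pr_marginal [Fintype β] (μ : Ω → ℝ) (X : Ω → α) (Y : Ω → β) (a : α) :
    ∑ b, pr μ (fun ω => (X ω, Y ω)) (a, b) = pr μ X a := by
  unfold pr
  rw [Finset.sum_comm]
  apply Finset.sum_congr rfl
  intro ω _
  by_cases hx : X ω = a <;> simp [hx, Prod.ext_iff]

end Aux

/-- If `A → B → C` is a Markov chain then `J(A;(B,C)) = J(A;B)`. -/
theorem markov_vinfo_eq {Ω 𝒜 ℬ 𝒞 : Type*} [Fintype Ω] [Fintype 𝒜] [Fintype ℬ] [Fintype 𝒞]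
    (μ : Ω → ℝ) (hμ : IsPMF μ) (A : Ω → 𝒜) (B : Ω → ℬ) (C : Ω → 𝒞)
    (hMarkov : ∀ (a : 𝒜) (b : ℬ) (c : 𝒞),
      pr μ (fun ω => (A ω, C ω, B ω)) (a, c, b) * pr μ B b =
        pr μ (fun ω => (A ω, B ω)) (a, b) * pr μ (fun ω => (C ω, B ω)) (c, b)) :
    vinfo μ A (fun ω => (B ω, C ω)) = vinfo μ A B := by
  obtain ⟨hpos, hsum⟩ := hμ
  unfold vinfo
  congr 1
  apply Finset.sum_congr rfl
  intro a _
  rw [Fintype.sum_prod_type]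
  apply Finset.sum_congr rfl
  intro b _
  by_cases hB : pr μ B b = 0
  · have h1 : ∀ c, pr μ (fun ω => (A ω, B ω, C ω)) (a, b, c) = 0 := fun c =>
      pr_eq_zero μ hpos _ B _ b (fun ω h => by simpa using congrArg (fun p => p.2.1) h) hB
    have h2 : ∀ c, pr μ (fun ω => (B ω, C ω)) (b, c) = 0 := fun c =>
      pr_eq_zero μ hpos _ B _ b (fun ω h => by simpa using congrArg (fun p => p.1) h) hB
    have h3 : pr μ (fun ω => (A ω, B ω)) (a, b) = 0 :=
      pr_eq_zero μ hpos _ B _ b (fun ω h => by simpa using congrArg (fun p => p.2) h) hB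
    simp [h1, h2, h3, hB]
  · have hBpos : 0 < pr μ B b := lt_of_le_of_ne (pr_nonneg μ hpos B b) (Ne.symm hB)
    have key : ∀ c, pr μ (fun ω => (A ω, B ω, C ω)) (a, b, c)
        = pr μ (fun ω => (A ω, B ω)) (a, b) * pr μ (fun ω => (B ω, C ω)) (b, c) / pr μ B b := by
      intro c
      have e1 : pr μ (fun ω => (A ω, C ω, B ω)) (a, c, b)
          = pr μ (fun ω => (A ω, B ω, C ω)) (a, b, c) := by
        unfold pr
        apply Finset.sum_congr rfl
        intro ω _
        have : (A ω, C ω, B ω) = (a, c, b) ↔ (A ω, B ω, C ω) = (a, b, c) := by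
          simp only [Prod.ext_iff]; tauto
        simp only [this]
        split <;> rfl
      have e2 : pr μ (fun ω => (C ω, B ω)) (c, b)
          = pr μ (fun ω => (B ω, C ω)) (b, c) := by
        unfold pr
        apply Finset.sum_congr rfl
        intro ω _
        have : (C ω, B ω) = (c, b) ↔ (B ω, C ω) = (b, c) := by
          simp only [Prod.ext_iff]; tauto
        simp only [this]
        split <;> rfl
      have h := hMarkov a b c
      rw [e1, e2] at h
      field_simp
      linarith [h]
    calc ∑ c, |pr μ (fun ω => (A ω, B ω, C ω)) (a, b, c)
          - pr μ A a * pr μ (fun ω => (B ω, C ω)) (b, c)|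
        = ∑ c, (pr μ (fun ω => (B ω, C ω)) (b, c) / pr μ B b)
            * |pr μ (fun ω => (A ω, B ω)) (a, b) - pr μ A a * pr μ B b| := by
          apply Finset.sum_congr rfl
          intro c _
          rw [key c, ← abs_of_nonneg (div_nonneg (pr_nonneg μ hpos _ _) hBpos.le), ← abs_mul]
          congr 1
          field_simp
      _ = |pr μ (fun ω => (A ω, B ω)) (a, b) - pr μ A a * pr μ B b| := by
          rw [← Finset.sum_mul, ← Finset.sum_div, pr_marginal, div_self hB, one_mul]
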